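/- Let k ≥ 3 be an integer and set α = k - 1 + √(k(k-2)) and β = k - 1 - √(k(k-2)). For every integer i ≥ 0, the real number A_i = (α^i + β^i)/2 + (k/(2√(k(k-2))))·(α^i - β^i) is an odd positive integer; consequently m_i = (A_i + 1)/2 is a positive integer satisfying (m_i : ℝ) = (1/4)·(2 + ((k + √(k(k-2)))/√(k(k-2)))·α^i + ((-k + √(k(k-2)))/√(k(k-2)))·β^i). -/
import Mathlib


/-- `s = √(k(k-2))`. -/
noncomputable def pellSqrt (k : ℤ) : ℝ := Real.sqrt ((k : ℝ) * ((k : ℝ) - 2))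

/-- `α = k - 1 + √(k(k-2))`. -/
noncomputable def pellAlpha (k : ℤ) : ℝ := (k : ℝ) - 1 + pellSqrt k

/-- `β = k - 1 - √(k(k-2))`. -/
noncomputable def pellBeta (k : ℤ) : ℝ := (k : ℝ) - 1 - pellSqrt k

/-- The integer sequence `A`. -/
def pellA (k : ℤ) : ℕ → ℤ
  | 0 => 1
  | 1 => 2 * k - 1
  | (n + 2) => 2 * (k - 1) * pellA k (n + 1) - pellA k n

lemma pellSqrt_sq (k : ℤ) (hk : 3 ≤ k) : pellSqrt k ^ 2 = (k : ℝ) * ((k : ℝ) - 2) := by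
  rw [pellSqrt, Real.sq_sqrt]
  have : (3 : ℝ) ≤ (k : ℝ) := by exact_mod_cast hk
  nlinarith

lemma pellSqrt_pos (k : ℤ) (hk : 3 ≤ k) : 0 < pellSqrt k := by
  apply Real.sqrt_pos.mpr
  have : (3 : ℝ) ≤ (k : ℝ) := by exact_mod_cast hk
  nlinarith

lemma pellA_real (k : ℤ) (hk : 3 ≤ k) (i : ℕ) :
    ((pellA k i : ℤ) : ℝ) = (pellAlpha k ^ i + pellBeta k ^ i) / 2 +
        ((k : ℝ) / (2 * pellSqrt k)) * (pellAlpha k ^ i - pellBeta k ^ i) := by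
  have hs := pellSqrt_pos k hk
  have hs2 := pellSqrt_sq k hk
  have hsne : pellSqrt k ≠ 0 := ne_of_gt hs
  induction i using Nat.twoStepInduction with
  | zero =>
    simp [pellA]
  | one =>
    simp only [pellA, pellAlpha, pellBeta, pow_one]
    push_cast
    field_simp
    ring
  | more n ih1 ih2 =>
    show ((2 * (k - 1) * pellA k (n + 1) - pellA k n : ℤ) : ℝ) = _
    push_cast
    rw [ih2, ih1]
    have ha : pellAlpha k ^ (n + 2) = 2 * ((k:ℝ) - 1) * pellAlpha k ^ (n + 1) - pellAlpha k ^ n := by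
      have : pellAlpha k ^ (n + 2) = pellAlpha k ^ n * pellAlpha k ^ 2 := by ring
      rw [this]
      have h2 : pellAlpha k ^ 2 = 2 * ((k:ℝ) - 1) * pellAlpha k - 1 := by
        simp only [pellAlpha]; nlinarith [hs2]
      rw [h2]; ring
    have hb : pellBeta k ^ (n + 2) = 2 * ((k:ℝ) - 1) * pellBeta k ^ (n + 1) - pellBeta k ^ n := by
      have : pellBeta k ^ (n + 2) = pellBeta k ^ n * pellBeta k ^ 2 := by ring
      rw [this]
      have h2 : pellBeta k ^ 2 = 2 * ((k:ℝ) - 1) * pellBeta k - 1 := by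
        simp only [pellBeta]; nlinarith [hs2]
      rw [h2]; ring
    rw [ha, hb]
    field_simp
    ring

lemma pellA_odd (k : ℤ) (i : ℕ) : Odd (pellA k i) := by
  induction i using Nat.twoStepInduction with
  | zero => exact ⟨0, rfl⟩
  | one => exact ⟨k - 1, by show 2 * k - 1 = _; ring⟩
  | more n ih1 ih2 =>
    obtain ⟨a, ha⟩ := ih1
    obtain ⟨b, hb⟩ := ih2
    refine ⟨(k - 1) * (2 * b + 1) - a - 1, ?_⟩
    show 2 * (k - 1) * pellA k (n + 1) - pellA k n = _
    rw [hb, ha]; ring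

lemma pellA_pos (k : ℤ) (hk : 3 ≤ k) (i : ℕ) :
    0 < pellA k i ∧ pellA k i ≤ pellA k (i + 1) := by
  induction i with
  | zero => simp [pellA]; omega
  | succ n ih =>
    obtain ⟨h1, h2⟩ := ih
    have : pellA k (n + 2) = 2 * (k - 1) * pellA k (n + 1) - pellA k n := rfl
    constructor
    · omega
    · rw [this]; nlinarith

theorem A_odd_positive_and_m_integer (k : ℤ) (hk : 3 ≤ k) (i : ℕ) :
    ∃ A m : ℤ, Odd A ∧ 0 < A ∧
      (A : ℝ) = (pellAlpha k ^ i + pellBeta k ^ i) / 2 +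
        ((k : ℝ) / (2 * pellSqrt k)) * (pellAlpha k ^ i - pellBeta k ^ i) ∧
      m = (A + 1) / 2 ∧ 0 < m ∧
      (m : ℝ) = (1 / 4) * (2 + (((k : ℝ) + pellSqrt k) / pellSqrt k) * pellAlpha k ^ i
          + ((-(k : ℝ) + pellSqrt k) / pellSqrt k) * pellBeta k ^ i) := by
  refine ⟨pellA k i, (pellA k i + 1) / 2, pellA_odd k i, (pellA_pos k hk i).1,
    pellA_real k hk i, rfl, ?_, ?_⟩
  · obtain ⟨a, ha⟩ := pellA_odd k i
    have := (pellA_pos k hk i).1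
    omega
  · obtain ⟨a, ha⟩ := pellA_odd k i
    have hm : ((pellA k i + 1) / 2 : ℤ) = a + 1 := by omega
    have hA := pellA_real k hk i
    have hs := pellSqrt_pos k hk
    have hsne : pellSqrt k ≠ 0 := ne_of_gt hs
    have hmr : (((pellA k i + 1) / 2 : ℤ) : ℝ) = ((pellA k i : ℤ) + 1) / 2 := by
      rw [hm]; push_cast [ha]; ring
    rw [hmr]
    rw [hA]
    field_simp
    ring
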